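/- Let y_0 ∈ (0,π) be the unique zero of L(y) = 5 cos y + 8 cos 2y - 2 cos 3y - 8, and let ℓ_1(l,n) = (4/n) tan(πl/n) sin²(3πl/n) L(2πl/n) / (4cos(2πl/n) - 4cos(4πl/n) + 9). For n ≥ 4 and integers l with 0 < l < n/2, l ≠ n/3: ℓ_1(l,n) > 0 if 0 < l/n < y_0/(2π), and ℓ_1(l,n) < 0 if y_0/(2π) < l/n < 1/2. -/
import Mathlib


open Real Set

/-- `L(y) = 5 cos y + 8 cos 2y - 2 cos 3y - 8`. -/
noncomputable def lorenz96L (y : ℝ) : ℝ :=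
  5 * Real.cos y + 8 * Real.cos (2 * y) - 2 * Real.cos (3 * y) - 8

/-- The simplified first Lyapunov coefficient
`ℓ₁(l,n) = (4/n) tan(πl/n) sin²(3πl/n) L(2πl/n) / (4cos(2πl/n) - 4cos(4πl/n) + 9)`. -/
noncomputable def lorenz96ell1 (l n : ℕ) : ℝ :=
  4 / n * Real.tan (Real.pi * l / n) * Real.sin (3 * Real.pi * l / n) ^ 2
    * lorenz96L (2 * Real.pi * l / n)
    / (4 * Real.cos (2 * Real.pi * l / n) - 4 * Real.cos (4 * Real.pi * l / n) + 9)

lemma lorenz96L_cont : Continuous lorenz96L := by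
  unfold lorenz96L; fun_prop

lemma lorenz96L_zero : lorenz96L 0 = 3 := by norm_num [lorenz96L]

lemma lorenz96L_pi : lorenz96L Real.pi = -3 := by
  have h2 : Real.cos (2 * Real.pi) = 1 := Real.cos_two_pi
  have h3 : Real.cos (3 * Real.pi) = -1 := by
    have h : (3:ℝ) * Real.pi = 2*Real.pi + Real.pi := by ring
    rw [h, Real.cos_add, Real.cos_two_pi, Real.sin_two_pi, Real.cos_pi]; ring
  rw [lorenz96L, h2, h3, Real.cos_pi]; norm_num

/-- Let `y₀ ∈ (0,π)` be the unique zero of `L`. For `n ≥ 4` and integers `l` with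
`0 < l < n/2`, `l ≠ n/3`: `ℓ₁(l,n) > 0` if `0 < l/n < y₀/(2π)`, and `ℓ₁(l,n) < 0`
if `y₀/(2π) < l/n < 1/2`. -/
theorem lorenz96_lyapunov_sign (y₀ : ℝ) (hy₀ : y₀ ∈ Ioo (0 : ℝ) Real.pi)
    (hLy₀ : lorenz96L y₀ = 0)
    (huniq : ∀ y ∈ Ioo (0 : ℝ) Real.pi, lorenz96L y = 0 → y = y₀)
    (n : ℕ) (hn : 4 ≤ n) (l : ℕ)
    (hl0 : 0 < l) (hl2 : (l : ℝ) < n / 2) (hl3 : (l : ℝ) ≠ n / 3) :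
    ((l : ℝ) / n < y₀ / (2 * Real.pi) → 0 < lorenz96ell1 l n) ∧
    (y₀ / (2 * Real.pi) < (l : ℝ) / n → lorenz96ell1 l n < 0) := by
  obtain ⟨hy₀0, hy₀π⟩ := hy₀
  have hπ := Real.pi_pos
  -- sign of L on the two subintervals
  have hLpos : ∀ y : ℝ, 0 < y → y < y₀ → 0 < lorenz96L y := by
    intro y hy0 hyy
    by_contra h
    push_neg at h
    rcases eq_or_lt_of_le h with heq | hlt
    · have := huniq y ⟨hy0, hyy.trans hy₀π⟩ heq
      linarith
    · obtain ⟨z, hz, hzeq⟩ := intermediate_value_Icc' (le_of_lt hy0)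
        lorenz96L_cont.continuousOn (by rw [lorenz96L_zero]; constructor <;> linarith : (0:ℝ) ∈ Icc (lorenz96L y) (lorenz96L 0))
      have hz0 : z ≠ 0 := by
        intro h; rw [h, lorenz96L_zero] at hzeq; norm_num at hzeq
      have := huniq z ⟨lt_of_le_of_ne hz.1 (Ne.symm hz0), lt_of_le_of_lt hz.2 (hyy.trans hy₀π)⟩ hzeq
      have : z < y₀ := lt_of_le_of_lt hz.2 hyy
      linarith [huniq z ⟨lt_of_le_of_ne hz.1 (Ne.symm hz0), lt_of_le_of_lt hz.2 (hyy.trans hy₀π)⟩ hzeq]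
  have hLneg : ∀ y : ℝ, y₀ < y → y < Real.pi → lorenz96L y < 0 := by
    intro y hyy hyπ
    by_contra h
    push_neg at h
    rcases eq_or_lt_of_le h with heq | hlt
    · have := huniq y ⟨hy₀0.trans hyy, hyπ⟩ heq.symm
      linarith
    · obtain ⟨z, hz, hzeq⟩ := intermediate_value_Icc' (le_of_lt hyπ)
        lorenz96L_cont.continuousOn (by rw [lorenz96L_pi]; constructor <;> linarith : (0:ℝ) ∈ Icc (lorenz96L Real.pi) (lorenz96L y))
      have hzπ : z ≠ Real.pi := by
        intro h; rw [h, lorenz96L_pi] at hzeq; norm_num at hzeq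
      have hzy₀ := huniq z ⟨lt_of_lt_of_le (hy₀0.trans hyy) hz.1, lt_of_le_of_ne hz.2 hzπ⟩ hzeq
      have : y₀ < z := lt_of_lt_of_le hyy hz.1
      linarith
  -- basic positivity facts
  have hn0 : (0:ℝ) < n := by positivity
  have hl0' : (1:ℝ) ≤ l := by exact_mod_cast hl0
  have hrat0 : (0:ℝ) < (l:ℝ) / n := by positivity
  have hrat2 : (l:ℝ) / n < 1 / 2 := by
    rw [div_lt_div_iff₀ hn0 (by norm_num)]; linarith
  -- tan positive
  have htanarg : Real.pi * l / n = Real.pi * ((l:ℝ)/n) := by ring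
  have htan : 0 < Real.tan (Real.pi * l / n) := by
    rw [htanarg]
    apply Real.tan_pos_of_pos_of_lt_pi_div_two
    · positivity
    · rw [show Real.pi / 2 = Real.pi * (1/2) by ring]
      exact (mul_lt_mul_iff_right₀ hπ).mpr hrat2
  -- sin² positive
  have hsin : Real.sin (3 * Real.pi * l / n) ≠ 0 := by
    intro h
    rw [Real.sin_eq_zero_iff] at h
    obtain ⟨k, hk⟩ := h
    have hk' : (k:ℝ) = 3 * ((l:ℝ)/n) := by
      field_simp at hk ⊢
      nlinarith [hπ]
    have h1 : (0:ℝ) < k := by rw [hk']; positivity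
    have h2 : (k:ℝ) < 2 := by rw [hk']; linarith
    have h1' : (1:ℤ) ≤ k := by exact_mod_cast h1
    have h2' : (k:ℤ) < 2 := by exact_mod_cast h2
    have : k = 1 := by omega
    rw [this] at hk'
    apply hl3
    push_cast at hk'
    field_simp at hk' ⊢
    linarith
  have hsinsq : 0 < Real.sin (3 * Real.pi * l / n) ^ 2 := by positivity
  -- denominator positive
  have hcosarg : (4:ℝ) * Real.pi * l / n = 2 * (2 * Real.pi * l / n) := by ring
  have hden : 0 < 4 * Real.cos (2 * Real.pi * l / n) - 4 * Real.cos (4 * Real.pi * l / n) + 9 := by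
    rw [hcosarg, Real.cos_two_mul]
    nlinarith [Real.neg_one_le_cos (2 * Real.pi * l / n), Real.cos_le_one (2 * Real.pi * l / n),
      sq_nonneg (Real.cos (2 * Real.pi * l / n) + 1)]
  have hA : 0 < 4 / (n:ℝ) * Real.tan (Real.pi * l / n) * Real.sin (3 * Real.pi * l / n) ^ 2 := by
    positivity
  have hyval : 2 * Real.pi * l / n = 2 * Real.pi * ((l:ℝ)/n) := by ring
  have hy0 : 0 < 2 * Real.pi * l / n := by rw [hyval]; positivity
  have hyπ : 2 * Real.pi * l / n < Real.pi := by
    rw [hyval]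
    nlinarith [hπ, hrat2]
  constructor
  · intro hsmall
    have hylt : 2 * Real.pi * l / n < y₀ := by
      rw [hyval]
      have := (mul_lt_mul_iff_right₀ (show (0:ℝ) < 2 * Real.pi by positivity)).mpr hsmall
      rwa [mul_div_cancel₀ _ (ne_of_gt Real.two_pi_pos)] at this
    have hL := hLpos _ hy0 hylt
    unfold lorenz96ell1
    exact div_pos (mul_pos hA hL) hden
  · intro hbig
    have hygt : y₀ < 2 * Real.pi * l / n := by
      rw [hyval]
      have := (mul_lt_mul_iff_right₀ (show (0:ℝ) < 2 * Real.pi by positivity)).mpr hbig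
      rwa [mul_div_cancel₀ _ (ne_of_gt Real.two_pi_pos)] at this
    have hL := hLneg _ hygt hyπ
    unfold lorenz96ell1
    exact div_neg_of_neg_of_pos (mul_neg_of_pos_of_neg hA hL) hden
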